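/- The gSC sandwich bound: for every subset of active edges ℒ_a ⊆ ℒ, every partition map c : 𝒩 → 𝒞, and every grouping of the global edges into nonempty classes 𝒦, the sampled and coarse optimal welfares bracket the true optimal welfare: φ̲*(ℒ_a) ≤ φ* ≤ φ̄*. Consequently, the optimality gap of any sampled-feasible allocation x ∈ 𝓕̲(ℒ_a) satisfies φ* − φ(x) ≤ φ̄* − φ(x). -/

import Mathlib

open Finset

/-- A multi-product supply chain model with nodes `N`, products `P`,
suppliers `S`, consumers `D`, transport edges `L`, and technologies `T`. -/
structure SupplyChain (N P S D L T : Type) where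
  /-- node of supplier `i` -/
  nS : S → N
  /-- product of supplier `i` -/
  pS : S → P
  /-- supply capacity `s̄ᵢ` -/
  sBar : S → ℝ
  /-- supply cost `αˢᵢ` -/
  alphaS : S → ℝ
  /-- node of consumer `j` -/
  nD : D → N
  /-- product of consumer `j` -/
  pD : D → P
  /-- demand capacity `d̄ⱼ` -/
  dBar : D → ℝ
  /-- demand price `α^d_j` -/
  alphaD : D → ℝ
  /-- sending node `n_s(ℓ)` -/
  nsend : L → N
  /-- receiving node `n_r(ℓ)` -/
  nrecv : L → N
  /-- product transported `p(ℓ)` -/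
  pL : L → P
  /-- flow capacity `f̄_ℓ` -/
  fBar : L → ℝ
  /-- transport cost `α^f_ℓ` -/
  alphaF : L → ℝ
  /-- node of technology `t` -/
  nT : T → N
  /-- yield factors `γ_{t,p}` -/
  gamma : T → P → ℝ
  /-- per-facility processing capacity `ξ̄_t` -/
  xiBar : T → ℝ
  /-- maximum number of facilities `ȳ_t` -/
  yBar : T → ℕ
  /-- operating cost `α^ξ_t` -/
  alphaXi : T → ℝ
  /-- installation cost `α^y_t` -/
  alphaY : T → ℝ
  sBar_nonneg : ∀ i, 0 ≤ sBar i
  alphaS_nonneg : ∀ i, 0 ≤ alphaS i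
  dBar_nonneg : ∀ j, 0 ≤ dBar j
  alphaD_nonneg : ∀ j, 0 ≤ alphaD j
  fBar_nonneg : ∀ l, 0 ≤ fBar l
  alphaF_nonneg : ∀ l, 0 ≤ alphaF l
  xiBar_nonneg : ∀ t, 0 ≤ xiBar t
  alphaXi_nonneg : ∀ t, 0 ≤ alphaXi t
  alphaY_nonneg : ∀ t, 0 ≤ alphaY t

/-- An allocation `x = (s, d, f, ξ, y)`. -/
abbrev Alloc (S D L T : Type) : Type :=
  (S → ℝ) × (D → ℝ) × (L → ℝ) × (T → ℝ) × (T → ℤ)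

variable {N P S D L T : Type} [Fintype N] [Fintype P] [Fintype S] [Fintype D]
  [Fintype L] [Fintype T] [DecidableEq N] [DecidableEq P]

/-- The feasible set `𝓕` of the supply chain model. -/
def Feasible (sc : SupplyChain N P S D L T) : Set (Alloc S D L T) :=
  { x | (∀ (n : N) (p : P),
        (∑ i ∈ univ.filter (fun i => sc.nS i = n ∧ sc.pS i = p), x.1 i)
        + (∑ l ∈ univ.filter (fun l => sc.nrecv l = n ∧ sc.pL l = p), x.2.2.1 l)
        - (∑ j ∈ univ.filter (fun j => sc.nD j = n ∧ sc.pD j = p), x.2.1 j)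
        - (∑ l ∈ univ.filter (fun l => sc.nsend l = n ∧ sc.pL l = p), x.2.2.1 l)
        + (∑ t ∈ univ.filter (fun t => sc.nT t = n), sc.gamma t p * x.2.2.2.1 t) = 0)
      ∧ (∀ j, 0 ≤ x.2.1 j ∧ x.2.1 j ≤ sc.dBar j)
      ∧ (∀ i, 0 ≤ x.1 i ∧ x.1 i ≤ sc.sBar i)
      ∧ (∀ l, 0 ≤ x.2.2.1 l ∧ x.2.2.1 l ≤ sc.fBar l)
      ∧ (∀ t, 0 ≤ x.2.2.2.2 t ∧ x.2.2.2.2 t ≤ (sc.yBar t : ℤ))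
      ∧ (∀ t, 0 ≤ x.2.2.2.1 t ∧ x.2.2.2.1 t ≤ (x.2.2.2.2 t : ℝ) * sc.xiBar t) }

/-- The total welfare `φ(x)`. -/
def welfare (sc : SupplyChain N P S D L T) (x : Alloc S D L T) : ℝ :=
  (∑ j, sc.alphaD j * x.2.1 j) - (∑ i, sc.alphaS i * x.1 i)
    - (∑ l, sc.alphaF l * x.2.2.1 l) - (∑ t, sc.alphaXi t * x.2.2.2.1 t)
    - (∑ t, sc.alphaY t * (x.2.2.2.2 t : ℝ))

/-- The optimal welfare `φ* = sup_{x ∈ 𝓕} φ(x)`. -/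
noncomputable def phiStar (sc : SupplyChain N P S D L T) : ℝ :=
  sSup (welfare sc '' Feasible sc)

/-- The sampled feasible set `𝓕̲(ℒ_a)`. -/
def SampledFeasible (sc : SupplyChain N P S D L T) (La : Set L) : Set (Alloc S D L T) :=
  { x ∈ Feasible sc | ∀ l, l ∉ La → x.2.2.1 l = 0 }

/-- The sampled optimal welfare `φ̲*(ℒ_a)`. -/
noncomputable def phiLower (sc : SupplyChain N P S D L T) (La : Set L) : ℝ :=
  sSup (welfare sc '' SampledFeasible sc La)

/-- Graph-coarsening data: a partition map `c : 𝒩 → 𝒞` on nodes together with a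
grouping of the global edges into classes indexed by `𝒦`. An edge `ℓ` is local if
`c(n_s(ℓ)) = c(n_r(ℓ))` and global otherwise; each class `k ∈ 𝒦` has a sending
partition `cs k`, a receiving partition `cr k` with `cs k ≠ cr k`, and a product
`pK k`, and consists of all global edges `ℓ` with `c(n_s(ℓ)) = cs k`,
`c(n_r(ℓ)) = cr k` and `p(ℓ) = pK k`; every global edge lies in exactly one class. -/
structure Coarsening (sc : SupplyChain N P S D L T) (C K : Type) where
  /-- the partition map `c : 𝒩 → 𝒞` -/
  part : N → C
  /-- the sending partition `c_s(k)` of class `k` -/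
  cs : K → C
  /-- the receiving partition `c_r(k)` of class `k` -/
  cr : K → C
  /-- the product `p(k)` of class `k` -/
  pK : K → P
  cs_ne_cr : ∀ k, cs k ≠ cr k
  unique_class : ∀ l : L, part (sc.nsend l) ≠ part (sc.nrecv l) →
    ∃! k : K, cs k = part (sc.nsend l) ∧ cr k = part (sc.nrecv l) ∧ pK k = sc.pL l

variable {C K : Type} [Fintype K] [DecidableEq C]

/-- The set of edges in global-edge class `k`. -/
def classSet (sc : SupplyChain N P S D L T) (co : Coarsening sc C K) (k : K) : Finset L :=
  univ.filter (fun l =>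
    co.part (sc.nsend l) = co.cs k ∧ co.part (sc.nrecv l) = co.cr k ∧ sc.pL l = co.pK k)

/-- The aggregated flow `f̂_k = Σ_{ℓ ∈ class k} f_ℓ`. -/
def aggFlow (sc : SupplyChain N P S D L T) (co : Coarsening sc C K) (f : L → ℝ) (k : K) : ℝ :=
  ∑ l ∈ classSet sc co k, f l

/-- The aggregated capacity `f̄̂_k = Σ_{ℓ ∈ class k} f̄_ℓ`. -/
def aggCap (sc : SupplyChain N P S D L T) (co : Coarsening sc C K) (k : K) : ℝ :=
  ∑ l ∈ classSet sc co k, sc.fBar l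

/-- The aggregated cost `α̂_k = min_{ℓ ∈ class k} α^f_ℓ` (as an infimum; for a
nonempty class this is the minimum transport cost over the class). -/
noncomputable def aggCost (sc : SupplyChain N P S D L T) (co : Coarsening sc C K) (k : K) : ℝ :=
  sInf (sc.alphaF '' (classSet sc co k : Set L))

/-- A coarse allocation `(s, d, g, ξ, y)` with one flow per global-edge class. -/
abbrev CoarseAlloc (S D K T : Type) : Type :=
  (S → ℝ) × (D → ℝ) × (K → ℝ) × (T → ℝ) × (T → ℤ)

/-- The coarse feasible set `𝓕̄`. -/
def CoarseFeasible (sc : SupplyChain N P S D L T) (co : Coarsening sc C K) :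
    Set (CoarseAlloc S D K T) :=
  { x | (∀ (c₀ : C) (p : P),
        (∑ i ∈ univ.filter (fun i => co.part (sc.nS i) = c₀ ∧ sc.pS i = p), x.1 i)
        + (∑ k ∈ univ.filter (fun k => co.cr k = c₀ ∧ co.pK k = p), x.2.2.1 k)
        - (∑ j ∈ univ.filter (fun j => co.part (sc.nD j) = c₀ ∧ sc.pD j = p), x.2.1 j)
        - (∑ k ∈ univ.filter (fun k => co.cs k = c₀ ∧ co.pK k = p), x.2.2.1 k)
        + (∑ t ∈ univ.filter (fun t => co.part (sc.nT t) = c₀), sc.gamma t p * x.2.2.2.1 t) = 0)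
      ∧ (∀ j, 0 ≤ x.2.1 j ∧ x.2.1 j ≤ sc.dBar j)
      ∧ (∀ i, 0 ≤ x.1 i ∧ x.1 i ≤ sc.sBar i)
      ∧ (∀ k, 0 ≤ x.2.2.1 k ∧ x.2.2.1 k ≤ aggCap sc co k)
      ∧ (∀ t, 0 ≤ x.2.2.2.2 t ∧ x.2.2.2.2 t ≤ (sc.yBar t : ℤ))
      ∧ (∀ t, 0 ≤ x.2.2.2.1 t ∧ x.2.2.2.1 t ≤ (x.2.2.2.2 t : ℝ) * sc.xiBar t) }

/-- The coarse welfare `φ̄(s,d,g,ξ,y)`. -/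
noncomputable def coarseWelfare (sc : SupplyChain N P S D L T) (co : Coarsening sc C K)
    (x : CoarseAlloc S D K T) : ℝ :=
  (∑ j, sc.alphaD j * x.2.1 j) - (∑ i, sc.alphaS i * x.1 i)
    - (∑ k, aggCost sc co k * x.2.2.1 k) - (∑ t, sc.alphaXi t * x.2.2.2.1 t)
    - (∑ t, sc.alphaY t * (x.2.2.2.2 t : ℝ))

/-- The coarse optimal welfare `φ̄*`. -/
noncomputable def phiUpper (sc : SupplyChain N P S D L T) (co : Coarsening sc C K) : ℝ :=
  sSup (coarseWelfare sc co '' CoarseFeasible sc co)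

/-!
Sampling only adds the constraints `f_ℓ = 0`, so it shrinks the feasible set and `φ̲* ≤ φ*`.
For `φ* ≤ φ̄*`, aggregate the flows of each class: summing the node balances over a partition,
flows on local edges cancel and flows on global edges add up to the class flows, so the image is
coarse-feasible; and since each class is charged its cheapest edge cost, its coarse welfare is at
least the original welfare. All welfare sets are bounded above by the maximal revenue
`Σⱼ α^d_j d̄ⱼ`, and the zero allocation is sampled-feasible, so the suprema can be compared.
-/

lemma sum_fiberwise_filter_and {α β γ M : Type*} [Fintype α] [Fintype β] [DecidableEq β]
    [DecidableEq γ] [AddCommMonoid M] (g : α → β) (c : β → γ) (c₀ : γ) (q : α → Prop)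
    [DecidablePred q] (v : α → M) :
    ∑ b with c b = c₀, ∑ a with g a = b ∧ q a, v a = ∑ a with c (g a) = c₀ ∧ q a, v a := by
  simpa [filter_filter, and_comm] using
    sum_fiberwise_eq_sum_filter (univ.filter q) (univ.filter (c · = c₀)) g v

lemma sum_fiberwise_filter {α β γ M : Type*} [Fintype α] [Fintype β] [DecidableEq β]
    [DecidableEq γ] [AddCommMonoid M] (g : α → β) (c : β → γ) (c₀ : γ) (v : α → M) :
    ∑ b with c b = c₀, ∑ a with g a = b, v a = ∑ a with c (g a) = c₀, v a := by
  simpa using sum_fiberwise_filter_and g c c₀ (fun _ => True) v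

section

omit [Fintype N] [Fintype P]

omit [Fintype L] [DecidableEq N] [DecidableEq P] in
lemma revenue_sub_costs_le (sc : SupplyChain N P S D L T) {s : S → ℝ} {d : D → ℝ} {c : ℝ}
    {ξ : T → ℝ} {y : T → ℤ} (hd : ∀ j, 0 ≤ d j ∧ d j ≤ sc.dBar j) (hs : ∀ i, 0 ≤ s i)
    (hc : 0 ≤ c) (hξ : ∀ t, 0 ≤ ξ t) (hy : ∀ t, 0 ≤ y t) :
    (∑ j, sc.alphaD j * d j) - (∑ i, sc.alphaS i * s i) - c - (∑ t, sc.alphaXi t * ξ t)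
      - (∑ t, sc.alphaY t * (y t : ℝ)) ≤ ∑ j, sc.alphaD j * sc.dBar j := by
  have hrevenue : ∑ j, sc.alphaD j * d j ≤ ∑ j, sc.alphaD j * sc.dBar j :=
    sum_le_sum fun j _ => mul_le_mul_of_nonneg_left (hd j).2 (sc.alphaD_nonneg j)
  have hsupply : 0 ≤ ∑ i, sc.alphaS i * s i :=
    sum_nonneg fun i _ => mul_nonneg (sc.alphaS_nonneg i) (hs i)
  have hoperating : 0 ≤ ∑ t, sc.alphaXi t * ξ t :=
    sum_nonneg fun t _ => mul_nonneg (sc.alphaXi_nonneg t) (hξ t)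
  have hinstallation : 0 ≤ ∑ t, sc.alphaY t * (y t : ℝ) :=
    sum_nonneg fun t _ => mul_nonneg (sc.alphaY_nonneg t) (Int.cast_nonneg (hy t))
  linarith

lemma zero_mem_sampledFeasible (sc : SupplyChain N P S D L T) (La : Set L) :
    (0 : Alloc S D L T) ∈ SampledFeasible sc La :=
  ⟨⟨fun n p => by simp, fun j => ⟨le_rfl, sc.dBar_nonneg j⟩, fun i => ⟨le_rfl, sc.sBar_nonneg i⟩,
    fun l => ⟨le_rfl, sc.fBar_nonneg l⟩, fun t => ⟨le_rfl, by simp⟩, fun t => ⟨le_rfl, by simp⟩⟩,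
    fun _ _ => rfl⟩

lemma welfare_le_sum_alphaD_mul_dBar {sc : SupplyChain N P S D L T} {x : Alloc S D L T}
    (hx : x ∈ Feasible sc) : welfare sc x ≤ ∑ j, sc.alphaD j * sc.dBar j :=
  revenue_sub_costs_le sc hx.2.1 (fun i => (hx.2.2.1 i).1)
    (sum_nonneg fun l _ => mul_nonneg (sc.alphaF_nonneg l) (hx.2.2.2.1 l).1)
    (fun t => (hx.2.2.2.2.2 t).1) (fun t => (hx.2.2.2.2.1 t).1)

section EdgeClasses

omit [Fintype S] [Fintype D] [Fintype T] [DecidableEq N]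

variable {sc : SupplyChain N P S D L T} (co : Coarsening sc C K)

section

omit [Fintype K]

lemma mem_classSet {k : K} {l : L} :
    l ∈ classSet sc co k ↔ co.part (sc.nsend l) = co.cs k ∧ co.part (sc.nrecv l) = co.cr k
      ∧ sc.pL l = co.pK k := by
  simp [classSet]

lemma classSet_disjoint {k k' : K} (h : k ≠ k') :
    Disjoint (classSet sc co k) (classSet sc co k') := by
  refine disjoint_left.2 fun l hl hl' => h ?_
  rw [mem_classSet] at hl hl'
  have hglobal : co.part (sc.nsend l) ≠ co.part (sc.nrecv l) := by
    rw [hl.1, hl.2.1]; exact co.cs_ne_cr k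
  exact (co.unique_class l hglobal).unique ⟨hl.1.symm, hl.2.1.symm, hl.2.2.symm⟩
    ⟨hl'.1.symm, hl'.2.1.symm, hl'.2.2.symm⟩

lemma aggCost_le {k : K} {l : L} (hl : l ∈ classSet sc co k) : aggCost sc co k ≤ sc.alphaF l :=
  csInf_le ((classSet sc co k).finite_toSet.image _).bddBelow (Set.mem_image_of_mem _ hl)

-- This also covers an empty class, where `aggCost` is `sInf ∅ = 0`.
lemma aggCost_nonneg (k : K) : 0 ≤ aggCost sc co k :=
  Real.sInf_nonneg (Set.forall_mem_image.2 fun l _ => sc.alphaF_nonneg l)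

end

lemma biUnion_classSet_filter [DecidableEq L] (Q : C → C → P → Prop)
    [∀ a b q, Decidable (Q a b q)] :
    (univ.filter fun k => Q (co.cs k) (co.cr k) (co.pK k)).biUnion (classSet sc co)
      = univ.filter fun l => Q (co.part (sc.nsend l)) (co.part (sc.nrecv l)) (sc.pL l)
          ∧ co.part (sc.nsend l) ≠ co.part (sc.nrecv l) := by
  ext l
  simp only [mem_biUnion, mem_filter, mem_univ, true_and, mem_classSet]
  constructor
  · rintro ⟨k, hQ, hs, hr, hp⟩
    rw [hs, hr, hp]
    exact ⟨hQ, co.cs_ne_cr k⟩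
  · rintro ⟨hQ, hglobal⟩
    obtain ⟨k, ⟨hs, hr, hp⟩, -⟩ := co.unique_class l hglobal
    exact ⟨k, by rwa [hs, hr, hp], hs.symm, hr.symm, hp.symm⟩

lemma sum_aggFlow_filter (Q : C → C → P → Prop) [∀ a b q, Decidable (Q a b q)] (f : L → ℝ) :
    ∑ k with Q (co.cs k) (co.cr k) (co.pK k), aggFlow sc co f k
      = ∑ l with Q (co.part (sc.nsend l)) (co.part (sc.nrecv l)) (sc.pL l)
          ∧ co.part (sc.nsend l) ≠ co.part (sc.nrecv l), f l := by
  classical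
  rw [← biUnion_classSet_filter, sum_biUnion fun k _ k' _ => classSet_disjoint co]
  rfl

lemma sum_aggFlow_recv_sub_sum_aggFlow_send (f : L → ℝ) (c₀ : C) (p : P) :
    (∑ k with co.cr k = c₀ ∧ co.pK k = p, aggFlow sc co f k)
      - ∑ k with co.cs k = c₀ ∧ co.pK k = p, aggFlow sc co f k
      = (∑ l with co.part (sc.nrecv l) = c₀ ∧ sc.pL l = p, f l)
        - ∑ l with co.part (sc.nsend l) = c₀ ∧ sc.pL l = p, f l := by
  have hrecv := sum_filter_add_sum_filter_not
    (univ.filter fun l => co.part (sc.nrecv l) = c₀ ∧ sc.pL l = p)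
    (fun l => co.part (sc.nsend l) ≠ co.part (sc.nrecv l)) f
  have hsend := sum_filter_add_sum_filter_not
    (univ.filter fun l => co.part (sc.nsend l) = c₀ ∧ sc.pL l = p)
    (fun l => co.part (sc.nsend l) ≠ co.part (sc.nrecv l)) f
  simp only [filter_filter] at hrecv hsend
  have hlocal :
      ∑ l with (co.part (sc.nrecv l) = c₀ ∧ sc.pL l = p)
        ∧ ¬co.part (sc.nsend l) ≠ co.part (sc.nrecv l), f l
      = ∑ l with (co.part (sc.nsend l) = c₀ ∧ sc.pL l = p)
        ∧ ¬co.part (sc.nsend l) ≠ co.part (sc.nrecv l), f l := by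
    refine sum_congr (filter_congr fun l _ => ?_) fun _ _ => rfl
    constructor <;> rintro ⟨⟨h, hp⟩, hl⟩ <;> exact ⟨⟨by simpa [not_not.1 hl] using h, hp⟩, hl⟩
  rw [sum_aggFlow_filter co (fun _ r q => r = c₀ ∧ q = p),
    sum_aggFlow_filter co (fun s _ q => s = c₀ ∧ q = p)]
  linarith

lemma sum_aggCost_mul_aggFlow_le {f : L → ℝ} (hf : ∀ l, 0 ≤ f l) :
    ∑ k, aggCost sc co k * aggFlow sc co f k ≤ ∑ l, sc.alphaF l * f l := by
  classical
  calc ∑ k, aggCost sc co k * aggFlow sc co f k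
      = ∑ k, ∑ l ∈ classSet sc co k, aggCost sc co k * f l := by
        simp only [aggFlow, mul_sum]
    _ ≤ ∑ k, ∑ l ∈ classSet sc co k, sc.alphaF l * f l :=
        sum_le_sum fun k _ => sum_le_sum fun l hl =>
          mul_le_mul_of_nonneg_right (aggCost_le co hl) (hf l)
    _ = ∑ l ∈ univ.biUnion (classSet sc co), sc.alphaF l * f l :=
        (sum_biUnion fun k _ k' _ => classSet_disjoint co).symm
    _ ≤ ∑ l, sc.alphaF l * f l :=
        sum_le_sum_of_subset_of_nonneg (subset_univ _)
          fun l _ _ => mul_nonneg (sc.alphaF_nonneg l) (hf l)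

end EdgeClasses

variable {sc : SupplyChain N P S D L T} (co : Coarsening sc C K)

def toCoarse (x : Alloc S D L T) : CoarseAlloc S D K T :=
  (x.1, x.2.1, aggFlow sc co x.2.2.1, x.2.2.2.1, x.2.2.2.2)

omit [DecidableEq N] in
lemma welfare_le_coarseWelfare_toCoarse {x : Alloc S D L T} (hf : ∀ l, 0 ≤ x.2.2.1 l) :
    welfare sc x ≤ coarseWelfare sc co (toCoarse co x) := by
  have hcost := sum_aggCost_mul_aggFlow_le co hf
  simp only [welfare, coarseWelfare, toCoarse]
  linarith

omit [DecidableEq N] in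
lemma coarseWelfare_le_sum_alphaD_mul_dBar {x : CoarseAlloc S D K T}
    (hx : x ∈ CoarseFeasible sc co) : coarseWelfare sc co x ≤ ∑ j, sc.alphaD j * sc.dBar j :=
  revenue_sub_costs_le sc hx.2.1 (fun i => (hx.2.2.1 i).1)
    (sum_nonneg fun k _ => mul_nonneg (aggCost_nonneg co k) (hx.2.2.2.1 k).1)
    (fun t => (hx.2.2.2.2.2 t).1) (fun t => (hx.2.2.2.2.1 t).1)

end

omit [Fintype P] in
lemma partition_balance_of_mem_feasible {sc : SupplyChain N P S D L T} {x : Alloc S D L T}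
    (hx : x ∈ Feasible sc) (part : N → C) (c₀ : C) (p : P) :
    (∑ i with part (sc.nS i) = c₀ ∧ sc.pS i = p, x.1 i)
      + (∑ l with part (sc.nrecv l) = c₀ ∧ sc.pL l = p, x.2.2.1 l)
      - (∑ j with part (sc.nD j) = c₀ ∧ sc.pD j = p, x.2.1 j)
      - (∑ l with part (sc.nsend l) = c₀ ∧ sc.pL l = p, x.2.2.1 l)
      + (∑ t with part (sc.nT t) = c₀, sc.gamma t p * x.2.2.2.1 t) = 0 := by
  have h := sum_eq_zero (s := univ.filter (part · = c₀)) fun n _ => hx.1 n p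
  simpa only [sum_add_distrib, sum_sub_distrib, sum_fiberwise_filter_and,
    sum_fiberwise_filter] using h

omit [Fintype P] in
lemma toCoarse_mem_coarseFeasible {sc : SupplyChain N P S D L T} (co : Coarsening sc C K)
    {x : Alloc S D L T} (hx : x ∈ Feasible sc) : toCoarse co x ∈ CoarseFeasible sc co := by
  have hpartition := partition_balance_of_mem_feasible hx co.part
  obtain ⟨-, hd, hs, hf, hy, hξ⟩ := hx
  refine ⟨fun c₀ p => ?_, hd, hs, fun k => ⟨sum_nonneg fun l _ => (hf l).1,
    sum_le_sum fun l _ => (hf l).2⟩, hy, hξ⟩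
  have hbalance := hpartition c₀ p
  have hflow := sum_aggFlow_recv_sub_sum_aggFlow_send co x.2.2.1 c₀ p
  simp only [toCoarse]
  linarith

theorem gSC_sandwich_general (sc : SupplyChain N P S D L T) (La : Set L)
    (co : Coarsening sc C K) :
    phiLower sc La ≤ phiStar sc
      ∧ phiStar sc ≤ phiUpper sc co
      ∧ ∀ x ∈ SampledFeasible sc La,
          phiStar sc - welfare sc x ≤ phiUpper sc co - welfare sc x := by
  have hsampled : SampledFeasible sc La ⊆ Feasible sc := fun _ hx => hx.1
  have hnonempty : (welfare sc '' SampledFeasible sc La).Nonempty :=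
    ⟨_, Set.mem_image_of_mem _ (zero_mem_sampledFeasible sc La)⟩
  have hbdd : BddAbove (welfare sc '' Feasible sc) :=
    ⟨_, Set.forall_mem_image.2 fun _ hx => welfare_le_sum_alphaD_mul_dBar hx⟩
  have hcoarseBdd : BddAbove (coarseWelfare sc co '' CoarseFeasible sc co) :=
    ⟨_, Set.forall_mem_image.2 fun _ hx => coarseWelfare_le_sum_alphaD_mul_dBar co hx⟩
  have hlower : phiLower sc La ≤ phiStar sc :=
    csSup_le_csSup hbdd hnonempty (Set.image_mono hsampled)
  have hupper : phiStar sc ≤ phiUpper sc co :=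
    csSup_le (hnonempty.mono (Set.image_mono hsampled)) <| Set.forall_mem_image.2 fun x hx =>
      (welfare_le_coarseWelfare_toCoarse co fun l => (hx.2.2.2.1 l).1).trans
        (le_csSup hcoarseBdd (Set.mem_image_of_mem _ (toCoarse_mem_coarseFeasible co hx)))
  exact ⟨hlower, hupper, fun x _ => sub_le_sub_right hupper _⟩

/-- The gSC sandwich bound: for every subset of active edges
`ℒ_a ⊆ ℒ`, every partition map and every grouping of the global edges into nonempty
classes, the sampled and coarse optimal welfares bracket the true optimal welfare:
`φ̲*(ℒ_a) ≤ φ* ≤ φ̄*`; consequently, the optimality gap of any sampled-feasible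
allocation `x ∈ 𝓕̲(ℒ_a)` satisfies `φ* − φ(x) ≤ φ̄* − φ(x)`. -/
theorem gSC_sandwich (sc : SupplyChain N P S D L T) (La : Set L)
    (co : Coarsening sc C K) (hne : ∀ k, (classSet sc co k).Nonempty) :
    phiLower sc La ≤ phiStar sc
      ∧ phiStar sc ≤ phiUpper sc co
      ∧ ∀ x ∈ SampledFeasible sc La,
          phiStar sc - welfare sc x ≤ phiUpper sc co - welfare sc x :=
  gSC_sandwich_general sc La co
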